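/- For C = ia⊗∂ - AI with A = ia·∂, the matrix ψ(C) where ψ(t) = t/(1-e^{-t}) satisfies ψ(C) = (A/(e^A - 1)) I - (1/A)(A/(e^A-1) - 1)(ia⊗∂), where A/(e^A-1) and (1/A)(A/(e^A-1)-1) are the well-defined formal power series obtained by substituting A into t/(e^t-1) and (1/t)(t/(e^t-1)-1) respectively. -/

import Mathlib

/-! With `P = ia⊗∂` one has `P * P = A • P`, so `(A • 1 - P) * P = 0` and by induction
`(A • 1 - P) ^ (m + 1) = A ^ (m + 1) • 1 - A ^ m • P`. Since `C = -(A • 1 - P)`, the sign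
`(-1) ^ k` in `ψ(C) = Σ ((-1)^k/k!) B_k C^k` cancels and the series splits termwise into
`Σ (B_m/m!) A^m` times `1` and `Σ (B_{m+1}/(m+1)!) A^m` times `P`. All series are evaluated
coefficientwise: as `A` and the entries of `P` have no constant term, a coefficient of total
degree `d` only involves the powers `m ≤ d`, which is the truncation built into `matF` and `scalF`.
-/

noncomputable section

/-- total degree of a monomial exponent. -/
def deg {n : ℕ} (d : Fin n →₀ ℕ) : ℕ := d.sum fun _ k => k

/-- the matrix power series `Σ_m a_m M^m` (entrywise; well defined when the entries of
`M` have zero constant term). -/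
def matF {n : ℕ} (a : ℕ → ℂ) (M : Matrix (Fin n) (Fin n) (MvPowerSeries (Fin n) ℂ)) :
    Matrix (Fin n) (Fin n) (MvPowerSeries (Fin n) ℂ) :=
  fun μ ν d => ∑ m ∈ Finset.range (deg d + 1), a m * MvPowerSeries.coeff d ((M ^ m) μ ν)

/-- the scalar power series `Σ_m a_m f^m` (well defined when `f` has zero constant term). -/
def scalF {n : ℕ} (a : ℕ → ℂ) (f : MvPowerSeries (Fin n) ℂ) : MvPowerSeries (Fin n) ℂ :=
  fun d => ∑ m ∈ Finset.range (deg d + 1), a m * MvPowerSeries.coeff d (f ^ m)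

section

open MvPowerSeries Finset Matrix

theorem sub_pow_succ_of_mul_self_eq {R : Type*} [Ring R] {a p : R} (hap : Commute a p)
    (hp : p * p = a * p) (m : ℕ) : (a - p) ^ (m + 1) = a ^ (m + 1) - a ^ m * p := by
  induction m with
  | zero => simp
  | succ m ih =>
    have hpa : a ^ m * p * a = a ^ (m + 1) * p := by
      rw [mul_assoc, ← hap.eq, ← mul_assoc, ← pow_succ]
    have hpp : a ^ m * p * p = a ^ (m + 1) * p := by
      rw [mul_assoc, hp, ← mul_assoc, ← pow_succ]
    rw [pow_succ, ih, sub_mul, mul_sub, mul_sub, hpa, hpp, ← pow_succ]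
    abel

theorem MvPowerSeries.coeff_pow_mul_eq_zero {σ R : Type*} [CommSemiring R]
    {f g : MvPowerSeries σ R} (hf : constantCoeff f = 0) {k m : ℕ} (hg : k ≤ g.order)
    {d : σ →₀ ℕ} (hd : d.degree < m + k) : coeff d (f ^ m * g) = 0 :=
  coeff_of_lt_order <| calc
    (d.degree : ℕ∞) < m + k := by exact_mod_cast hd
    _ ≤ (f ^ m).order + g.order := add_le_add (le_order_pow_of_constantCoeff_eq_zero m hf) hg
    _ ≤ (f ^ m * g).order := le_order_mul

theorem Matrix.vecMulVec_mul_self {m α : Type*} [Fintype m] [CommSemiring α] (u v : m → α) :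
    vecMulVec u v * vecMulVec u v = (v ⬝ᵥ u) • vecMulVec u v := by
  rw [vecMulVec_mul_vecMulVec]
  ext i j
  simp only [vecMulVec_apply, Pi.smul_apply, smul_apply, smul_eq_mul]
  ring

variable {n : ℕ}

theorem deg_eq_degree (d : Fin n →₀ ℕ) : deg d = d.degree := rfl

theorem coeff_scalF_eq_sum_range (a : ℕ → ℂ) {f : MvPowerSeries (Fin n) ℂ}
    (hf : constantCoeff f = 0) {d : Fin n →₀ ℕ} {N : ℕ} (hN : deg d < N) :
    coeff d (scalF a f) = ∑ m ∈ range N, a m * coeff d (f ^ m) := by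
  refine (eventually_constant_sum (fun m hm => ?_) hN).symm
  rw [← mul_one (f ^ m), coeff_pow_mul_eq_zero hf (k := 0) (by simp) (by
    rw [← deg_eq_degree]; omega), mul_zero]

theorem coeff_scalF_mul (a : ℕ → ℂ) {f : MvPowerSeries (Fin n) ℂ} (hf : constantCoeff f = 0)
    (g : MvPowerSeries (Fin n) ℂ) (d : Fin n →₀ ℕ) :
    coeff d (scalF a f * g) = ∑ m ∈ range (deg d + 1), a m * coeff d (f ^ m * g) := by
  have hsplit : ∀ p ∈ antidiagonal d, coeff p.1 (scalF a f) * coeff p.2 g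
      = ∑ m ∈ range (deg d + 1), a m * (coeff p.1 (f ^ m) * coeff p.2 g) := by
    intro p hp
    have : deg p.1 ≤ deg d := by
      rw [← mem_antidiagonal.mp hp, deg_eq_degree, deg_eq_degree, map_add]; omega
    rw [coeff_scalF_eq_sum_range a hf (Nat.lt_succ_of_le this), sum_mul]
    exact sum_congr rfl fun m _ => mul_assoc _ _ _
  rw [coeff_mul, sum_congr rfl hsplit, sum_comm]
  exact sum_congr rfl fun m _ => by rw [coeff_mul, mul_sum]

theorem coeff_matF (a : ℕ → ℂ) (M : Matrix (Fin n) (Fin n) (MvPowerSeries (Fin n) ℂ))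
    (μ ν : Fin n) (d : Fin n →₀ ℕ) :
    coeff d (matF a M μ ν) = ∑ m ∈ range (deg d + 1), a m * coeff d ((M ^ m) μ ν) := rfl

theorem matF_neg (c : ℕ → ℂ) (M : Matrix (Fin n) (Fin n) (MvPowerSeries (Fin n) ℂ)) :
    matF (fun m => (-1) ^ m * c m) (-M) = matF c M := by
  ext μ ν d
  rw [coeff_matF, coeff_matF]
  refine sum_congr rfl fun m _ => ?_
  rcases Nat.even_or_odd m with hm | hm <;> simp [hm.neg_pow]

theorem matF_smul_one_sub (b : ℕ → ℂ) {A : MvPowerSeries (Fin n) ℂ}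
    {P : Matrix (Fin n) (Fin n) (MvPowerSeries (Fin n) ℂ)} (hA : constantCoeff A = 0)
    (hP : ∀ μ ν, constantCoeff (P μ ν) = 0) (hPP : P * P = A • P) :
    matF b (A • 1 - P) = scalF b A • 1 - scalF (fun m => b (m + 1)) A • P := by
  have hpow : ∀ m, (A • 1 - P) ^ (m + 1) = A ^ (m + 1) • 1 - A ^ m • P := by
    intro m
    have hAP : (A • 1) * P = A • P := by rw [smul_mul_assoc, one_mul]
    rw [sub_pow_succ_of_mul_self_eq ((Commute.one_left P).smul_left A) (hPP.trans hAP.symm),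
      smul_pow, smul_pow, one_pow, one_pow, smul_mul_assoc, one_mul]
  ext μ ν d
  -- the `P`-series needs one power fewer, since the entries of `P` have no constant term
  have hlast : coeff d (A ^ deg d * P μ ν) = 0 :=
    coeff_pow_mul_eq_zero hA (one_le_order_iff_constCoeff_eq_zero.mpr (hP μ ν)) (by
      rw [← deg_eq_degree]; omega)
  rw [Matrix.sub_apply, Matrix.smul_apply, Matrix.smul_apply, smul_eq_mul, smul_eq_mul, map_sub,
    coeff_scalF_mul _ hA, coeff_scalF_mul _ hA, coeff_matF, sum_range_succ', sum_range_succ',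
    sum_range_succ _ (deg d), hlast]
  simp only [hpow, Matrix.sub_apply, Matrix.smul_apply, smul_eq_mul, map_sub, mul_sub,
    sum_sub_distrib, pow_zero, one_mul]
  ring

end

/-- for `C = ia⊗∂ - AI` with `A = ia·∂`, substituting `C` into the Bernoulli
generating series `ψ(t) = t/(1-e^{-t}) = Σ ((-1)^k/k!) B_k t^k` gives
`ψ(C) = (A/(e^A-1)) I - (1/A)(A/(e^A-1) - 1)(ia⊗∂)`, where `A/(e^A-1) = Σ_m (B_m/m!) A^m`
and `(1/A)(A/(e^A-1)-1) = Σ_m (B_{m+1}/(m+1)!) A^m`. -/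
theorem stmt17 {n : ℕ} (a : Fin n → ℂ)
    (P : Matrix (Fin n) (Fin n) (MvPowerSeries (Fin n) ℂ))
    (A : MvPowerSeries (Fin n) ℂ)
    (hP : ∀ μ ν, P μ ν = MvPowerSeries.C (Complex.I * a μ) * MvPowerSeries.X ν)
    (hA : A = ∑ α, MvPowerSeries.C (Complex.I * a α) * MvPowerSeries.X α) :
    matF (fun m => (-1 : ℂ) ^ m * (bernoulli m : ℂ) * (m.factorial : ℂ)⁻¹)
        (P - A • (1 : Matrix (Fin n) (Fin n) (MvPowerSeries (Fin n) ℂ)))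
      = scalF (fun m => (bernoulli m : ℂ) * (m.factorial : ℂ)⁻¹) A
            • (1 : Matrix (Fin n) (Fin n) (MvPowerSeries (Fin n) ℂ))
        - scalF (fun m => (bernoulli (m + 1) : ℂ) * ((m + 1).factorial : ℂ)⁻¹) A • P := by
  have hPc : P = Matrix.vecMulVec (fun μ => MvPowerSeries.C (Complex.I * a μ)) MvPowerSeries.X :=
    Matrix.ext hP
  have hA0 : MvPowerSeries.constantCoeff A = 0 := by simp [hA]
  have hP0 : ∀ μ ν, MvPowerSeries.constantCoeff (P μ ν) = 0 := by simp [hP]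
  have hPP : P * P = A • P := by
    rw [hPc, Matrix.vecMulVec_mul_self, dotProduct_comm, hA]
    rfl
  have hcoeff : (fun m => (-1 : ℂ) ^ m * (bernoulli m : ℂ) * (m.factorial : ℂ)⁻¹)
      = fun m => (-1) ^ m * ((bernoulli m : ℂ) * (m.factorial : ℂ)⁻¹) :=
    funext fun m => mul_assoc _ _ _
  rw [hcoeff, ← neg_sub, matF_neg, matF_smul_one_sub _ hA0 hP0 hPP]

end
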